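/- Let σ, Δt > 0. For all δ > 0, 1/(1 + (δ/σ²)(√(1 + 2σ²/(δ²Δt)) − 1)) ≥ 1/(1 + 1/(σ√(Δt/2))), and this lower bound is the limit of the left-hand side as δ → 0⁺. -/

import Mathlib

open Filter Set

private lemma lvf_key (σ Δt : ℝ) (hσ : 0 < σ) (hΔt : 0 < Δt) {δ : ℝ} (hδ : 0 < δ) :
    (δ / σ ^ 2) * (Real.sqrt (1 + 2 * σ ^ 2 / (δ ^ 2 * Δt)) - 1)
      = (Real.sqrt (δ ^ 2 + 2 * σ ^ 2 / Δt) - δ) / σ ^ 2 := by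
  have h1 : 1 + 2 * σ ^ 2 / (δ ^ 2 * Δt) = (δ ^ 2 + 2 * σ ^ 2 / Δt) / δ ^ 2 := by
    field_simp
  rw [h1, Real.sqrt_div (by positivity), Real.sqrt_sq hδ.le]
  field_simp

private lemma lvf_hB (σ Δt : ℝ) (hσ : 0 < σ) (hΔt : 0 < Δt) :
    1 / (σ * Real.sqrt (Δt / 2)) = Real.sqrt (2 * σ ^ 2 / Δt) / σ ^ 2 := by
  have hs : Real.sqrt (Δt / 2) * Real.sqrt (2 * σ ^ 2 / Δt) = σ := by
    rw [← Real.sqrt_mul (by positivity),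
      show Δt / 2 * (2 * σ ^ 2 / Δt) = σ ^ 2 by field_simp]
    exact Real.sqrt_sq hσ.le
  have h2 : (0:ℝ) < Real.sqrt (Δt / 2) := Real.sqrt_pos.mpr (by positivity)
  rw [div_eq_div_iff (by positivity) (by positivity), one_mul]
  linear_combination (-σ) * hs

theorem lvf_plus_lower_bound (σ Δt : ℝ) (hσ : 0 < σ) (hΔt : 0 < Δt) :
    (∀ δ : ℝ, 0 < δ →
      1 / (1 + (δ / σ ^ 2) * (Real.sqrt (1 + 2 * σ ^ 2 / (δ ^ 2 * Δt)) - 1))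
        ≥ 1 / (1 + 1 / (σ * Real.sqrt (Δt / 2)))) ∧
    Filter.Tendsto
      (fun δ : ℝ => 1 / (1 + (δ / σ ^ 2) * (Real.sqrt (1 + 2 * σ ^ 2 / (δ ^ 2 * Δt)) - 1)))
      (nhdsWithin 0 (Set.Ioi 0))
      (nhds (1 / (1 + 1 / (σ * Real.sqrt (Δt / 2))))) := by
  set c : ℝ := 2 * σ ^ 2 / Δt with hc
  have hcpos : 0 < c := by positivity
  have hB := lvf_hB σ Δt hσ hΔt
  -- bound: for δ > 0, sqrt(δ²+c) - δ ≤ sqrt c, and ≥ 0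
  have hub : ∀ δ : ℝ, 0 < δ → Real.sqrt (δ ^ 2 + c) - δ ≤ Real.sqrt c := by
    intro δ hδ
    have h1 : δ ^ 2 + c ≤ (δ + Real.sqrt c) ^ 2 := by
      nlinarith [Real.sq_sqrt hcpos.le, Real.sqrt_nonneg c]
    have h2 := Real.sqrt_le_sqrt h1
    rw [Real.sqrt_sq (by positivity)] at h2
    linarith
  have hlb : ∀ δ : ℝ, 0 < δ → 0 ≤ Real.sqrt (δ ^ 2 + c) - δ := by
    intro δ hδ
    have := Real.sqrt_le_sqrt (show δ ^ 2 ≤ δ ^ 2 + c by linarith)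
    rw [Real.sqrt_sq hδ.le] at this
    linarith
  constructor
  · intro δ hδ
    rw [lvf_key σ Δt hσ hΔt hδ, hB]
    apply one_div_le_one_div_of_le
    · have := hlb δ hδ
      have : 0 ≤ (Real.sqrt (δ ^ 2 + c) - δ) / σ ^ 2 := by positivity
      linarith
    · have h1 := hub δ hδ
      have : (Real.sqrt (δ ^ 2 + c) - δ) / σ ^ 2 ≤ Real.sqrt c / σ ^ 2 := by
        apply div_le_div_of_nonneg_right h1 (by positivity) |>.trans_eq rfl
      linarith
  · rw [hB]
    have hcont : Filter.Tendsto (fun δ : ℝ => (Real.sqrt (δ ^ 2 + c) - δ) / σ ^ 2)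
        (nhdsWithin 0 (Set.Ioi 0)) (nhds (Real.sqrt c / σ ^ 2)) := by
      have : ContinuousAt (fun δ : ℝ => (Real.sqrt (δ ^ 2 + c) - δ) / σ ^ 2) 0 := by
        fun_prop
      have h := this.continuousWithinAt (s := Set.Ioi (0:ℝ))
      have h0 : (Real.sqrt ((0:ℝ) ^ 2 + c) - 0) / σ ^ 2 = Real.sqrt c / σ ^ 2 := by norm_num
      simpa [ContinuousWithinAt, h0] using h
    have hdenpos : (0:ℝ) < 1 + Real.sqrt c / σ ^ 2 := by positivity
    have hcomp : Filter.Tendsto (fun δ : ℝ => 1 / (1 + (Real.sqrt (δ ^ 2 + c) - δ) / σ ^ 2))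
        (nhdsWithin 0 (Set.Ioi 0)) (nhds (1 / (1 + Real.sqrt c / σ ^ 2))) := by
      exact (ContinuousAt.div continuousAt_const
        (continuousAt_const.add continuousAt_id) hdenpos.ne').tendsto.comp hcont
    apply hcomp.congr'
    filter_upwards [self_mem_nhdsWithin] with δ hδ
    rw [lvf_key σ Δt hσ hΔt hδ]
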